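/- Let p be a prime and t ≥ 1 an integer. Let K = {g ∈ GSp₄(ℤ_p) : the four entries g₃₁, g₃₂, g₄₁, g₄₂ of g all lie in p^t·ℤ_p} be the depth-t Siegel parahoric subgroup, and let s = diag(1,1,p,p) ∈ GSp₄(ℚ_p). Then the double coset K·s·K ⊂ GSp₄(ℚ_p) is the disjoint union of the p³ left cosets n̄(p^t x, p^t y, p^t z)·s·K, where (x,y,z) ranges over {0,1,…,p−1}³. -/

import Mathlib

open Matrix

/-- The antisymmetric form defining `GSp₄`. -/
def Jmat (R : Type*) [CommRing R] : Matrix (Fin 4) (Fin 4) R :=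
  !![0, 0, 0, 1;
     0, 0, 1, 0;
     0, -1, 0, 0;
     -1, 0, 0, 0]

/-- Membership in `GSp₄(R)`: `gᵀ J g = ν J` for some unit `ν`. -/
def InGSp4 {R : Type*} [CommRing R] (g : Matrix (Fin 4) (Fin 4) R) : Prop :=
  ∃ ν : Rˣ, gᵀ * Jmat R * g = (ν : R) • Jmat R

/-- The unipotent element `n̄(x,y,z)` of the opposite Siegel parabolic. -/
def nbar {R : Type*} [CommRing R] (x y z : R) : Matrix (Fin 4) (Fin 4) R :=
  !![1, 0, 0, 0;
     0, 1, 0, 0;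
     x, y, 1, 0;
     z, x, 0, 1]

/-- The depth-`t` Siegel parahoric subgroup of `GSp₄(ℤ_p)`, viewed as a subset of
the `4 × 4` matrices over `ℚ_p`: integral matrices lying in `GSp₄(ℤ_p)` whose
lower-left `2 × 2` block vanishes modulo `p^t`. -/
def SiegelParahoric (p : ℕ) [Fact p.Prime] (t : ℕ) :
    Set (Matrix (Fin 4) (Fin 4) ℚ_[p]) :=
  {g | ∃ g' : Matrix (Fin 4) (Fin 4) ℤ_[p],
    g = g'.map (fun a => (a : ℚ_[p])) ∧ InGSp4 g' ∧
    (p : ℤ_[p]) ^ t ∣ g' 2 0 ∧ (p : ℤ_[p]) ^ t ∣ g' 2 1 ∧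
    (p : ℤ_[p]) ^ t ∣ g' 3 0 ∧ (p : ℤ_[p]) ^ t ∣ g' 3 1}

/-- The element `s = diag(1,1,p,p)` of `GSp₄(ℚ_p)`. -/
noncomputable def sMat (p : ℕ) [Fact p.Prime] : Matrix (Fin 4) (Fin 4) ℚ_[p] :=
  !![1, 0, 0, 0;
     0, 1, 0, 0;
     0, 0, (p : ℚ_[p]), 0;
     0, 0, 0, (p : ℚ_[p])]

/-- The left coset `n̄(p^t x, p^t y, p^t z) · s · K` for `(x,y,z) ∈ {0,…,p−1}³`. -/
def Ucoset (p : ℕ) [Fact p.Prime] (t : ℕ) (v : Fin p × Fin p × Fin p) :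
    Set (Matrix (Fin 4) (Fin 4) ℚ_[p]) :=
  {m | ∃ k ∈ SiegelParahoric p t,
    m = nbar ((p : ℚ_[p]) ^ t * ((v.1 : ℕ) : ℚ_[p]))
             ((p : ℚ_[p]) ^ t * ((v.2.1 : ℕ) : ℚ_[p]))
             ((p : ℚ_[p]) ^ t * ((v.2.2 : ℕ) : ℚ_[p])) * sMat p * k}

/-!
Write `k ∈ K` in `2 × 2` blocks `(A, B; C, D)`. Since `t ≥ 1`, `A` is invertible over `ℤ_p`, and
the symplectic relation forces `C A⁻¹` to have the shape `(x, y; z, x)` of the lower-left block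
of `n̄(x, y, z)`; hence `k = n̄(p^t μ) q` with `q` in the Siegel parabolic. Splitting `μ = d + p r`
with `p`-adic digits `d`, the element `s⁻¹ n̄(p^{t+1} r) q s` lies in `K`, so `k s ∈ n̄(p^t d) s K`.
Conversely, if `n̄(p^t d) s K` meets `n̄(p^t d') s K`, comparing lower-left blocks gives
`(d₁ - d₁', d₂ - d₂') A ≡ (d₃ - d₃', d₁ - d₁') A ≡ 0 (mod p)`, whence `d = d'`.
-/

section GSp4

variable {R : Type*} [CommRing R]

def sdiag (u : R) : Matrix (Fin 4) (Fin 4) R := diagonal ![1, 1, u, u]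

def LowerLeftDvd (d : R) (g : Matrix (Fin 4) (Fin 4) R) : Prop :=
  d ∣ g 2 0 ∧ d ∣ g 2 1 ∧ d ∣ g 3 0 ∧ d ∣ g 3 1

theorem nbar_mul_nbar (a b c a' b' c' : R) :
    nbar a b c * nbar a' b' c' = nbar (a + a') (b + b') (c + c') := by
  ext i j
  fin_cases i <;> fin_cases j <;> simp [nbar, mul_apply, Fin.sum_univ_four]

theorem nbar_zero : (nbar 0 0 0 : Matrix (Fin 4) (Fin 4) R) = 1 := by
  ext i j
  fin_cases i <;> fin_cases j <;> simp [nbar, one_apply]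

theorem det_Jmat : (Jmat R).det = 1 := by
  simp [Jmat, det_succ_row_zero, Fin.sum_univ_succ, Fin.succAbove]
  norm_num

theorem det_eq_of_lowerLeft_eq_zero {M : Matrix (Fin 4) (Fin 4) R}
    (h20 : M 2 0 = 0) (h21 : M 2 1 = 0) (h30 : M 3 0 = 0) (h31 : M 3 1 = 0) :
    M.det = (M 0 0 * M 1 1 - M 0 1 * M 1 0) * (M 2 2 * M 3 3 - M 2 3 * M 3 2) := by
  simp [det_succ_column_zero, Fin.sum_univ_succ, h20, h21, h30, h31, Fin.succAbove, submatrix]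
  ring

theorem inGSp4_nbar (a b c : R) : InGSp4 (nbar a b c) := by
  refine ⟨1, ?_⟩
  ext i j
  fin_cases i <;> fin_cases j <;> simp [nbar, Jmat, mul_apply, Fin.sum_univ_four]

theorem InGSp4.mul {g h : Matrix (Fin 4) (Fin 4) R} (hg : InGSp4 g) (hh : InGSp4 h) :
    InGSp4 (g * h) := by
  obtain ⟨ν, hν⟩ := hg
  obtain ⟨μ, hμ⟩ := hh
  refine ⟨ν * μ, ?_⟩
  calc (g * h)ᵀ * Jmat R * (g * h) = hᵀ * (gᵀ * Jmat R * g) * h := by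
        simp only [transpose_mul, Matrix.mul_assoc]
    _ = _ := by rw [hν, Matrix.mul_smul, Matrix.smul_mul, hμ, smul_smul, Units.val_mul]

theorem InGSp4.isUnit_det {g : Matrix (Fin 4) (Fin 4) R} (hg : InGSp4 g) : IsUnit g.det := by
  obtain ⟨ν, hν⟩ := hg
  have h := congrArg det hν
  rw [det_mul, det_mul, det_transpose, det_smul, det_Jmat] at h
  have : IsUnit (g.det * g.det) := by
    rw [← mul_one (g.det * g.det), mul_right_comm, h]; simp
  exact (IsUnit.mul_iff.mp this).1

theorem sdiag_mul_Jmat_mul_sdiag (u : R) : sdiag u * Jmat R * sdiag u = u • Jmat R := by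
  ext i j
  fin_cases i <;> fin_cases j <;> simp [sdiag, Jmat, mul_apply, Fin.sum_univ_four]

theorem InGSp4.of_sdiag_mul_eq_mul_sdiag [IsDomain R] {u : R} (hu : u ≠ 0)
    {X H : Matrix (Fin 4) (Fin 4) R} (hX : InGSp4 X) (h : sdiag u * H = X * sdiag u) :
    InGSp4 H := by
  obtain ⟨ν, hν⟩ := hX
  refine ⟨ν, ?_⟩
  have key : u • (Hᵀ * Jmat R * H) = u • ((ν : R) • Jmat R) := by
    calc u • (Hᵀ * Jmat R * H) = Hᵀ * (sdiag u * Jmat R * sdiag u) * H := by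
          rw [sdiag_mul_Jmat_mul_sdiag, Matrix.mul_smul, Matrix.smul_mul]
      _ = (sdiag u * H)ᵀ * Jmat R * (sdiag u * H) := by
          simp only [transpose_mul, sdiag, diagonal_transpose, Matrix.mul_assoc]
      _ = sdiag u * (Xᵀ * Jmat R * X) * sdiag u := by
          rw [h]; simp only [transpose_mul, sdiag, diagonal_transpose, Matrix.mul_assoc]
      _ = u • ((ν : R) • Jmat R) := by
          rw [hν, Matrix.mul_smul, Matrix.smul_mul, sdiag_mul_Jmat_mul_sdiag, smul_comm]
  exact smul_right_injective _ hu key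

theorem InGSp4.lowerLeft_relation {g : Matrix (Fin 4) (Fin 4) R} (hg : InGSp4 g) :
    g 0 0 * g 3 1 + g 1 0 * g 2 1 = g 2 0 * g 1 1 + g 3 0 * g 0 1 := by
  obtain ⟨ν, hν⟩ := hg
  have h := congrFun (congrFun hν 0) 1
  simp [Jmat, mul_apply, Fin.sum_univ_four] at h
  linear_combination h

theorem LowerLeftDvd.mono {d d' : R} {g : Matrix (Fin 4) (Fin 4) R} (h : d ∣ d')
    (hg : LowerLeftDvd d' g) : LowerLeftDvd d g :=
  ⟨h.trans hg.1, h.trans hg.2.1, h.trans hg.2.2.1, h.trans hg.2.2.2⟩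

theorem LowerLeftDvd.mul {d : R} {g h : Matrix (Fin 4) (Fin 4) R} (hg : LowerLeftDvd d g)
    (hh : LowerLeftDvd d h) : LowerLeftDvd d (g * h) := by
  obtain ⟨g20, g21, g30, g31⟩ := hg
  obtain ⟨h20, h21, h30, h31⟩ := hh
  refine ⟨?_, ?_, ?_, ?_⟩ <;> simp only [mul_apply, Fin.sum_univ_four] <;>
    exact dvd_add (dvd_add (dvd_add (dvd_mul_of_dvd_left (by assumption) _)
      (dvd_mul_of_dvd_left (by assumption) _)) (dvd_mul_of_dvd_right (by assumption) _))
      (dvd_mul_of_dvd_right (by assumption) _)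

theorem lowerLeftDvd_nbar (d a b c : R) : LowerLeftDvd d (nbar (d * a) (d * b) (d * c)) :=
  ⟨dvd_mul_right _ _, dvd_mul_right _ _, dvd_mul_right _ _, dvd_mul_right _ _⟩

theorem exists_sdiag_mul_eq_mul_sdiag {u d : R} {X : Matrix (Fin 4) (Fin 4) R}
    (hX : LowerLeftDvd (u * d) X) :
    ∃ H, LowerLeftDvd d H ∧ sdiag u * H = X * sdiag u := by
  obtain ⟨⟨w20, h20⟩, ⟨w21, h21⟩, ⟨w30, h30⟩, ⟨w31, h31⟩⟩ := hX
  refine ⟨!![X 0 0, X 0 1, u * X 0 2, u * X 0 3; X 1 0, X 1 1, u * X 1 2, u * X 1 3;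
      d * w20, d * w21, X 2 2, X 2 3; d * w30, d * w31, X 3 2, X 3 3],
    ⟨dvd_mul_right _ _, dvd_mul_right _ _, dvd_mul_right _ _, dvd_mul_right _ _⟩, ?_⟩
  ext i j
  fin_cases i <;> fin_cases j <;> simp [sdiag, h20, h21, h30, h31] <;> ring

theorem eq_nbar_mul_nbar_neg_mul (x y z : R) (g : Matrix (Fin 4) (Fin 4) R) :
    g = nbar x y z * (nbar (-x) (-y) (-z) * g) := by
  rw [← Matrix.mul_assoc, nbar_mul_nbar]
  simp [nbar_zero]

theorem InGSp4.exists_eq_nbar_mul {d : R} {g : Matrix (Fin 4) (Fin 4) R} (hg : InGSp4 g)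
    (hA : IsUnit (g 0 0 * g 1 1 - g 0 1 * g 1 0)) (hd : LowerLeftDvd d g) :
    ∃ a b c q, InGSp4 q ∧ LowerLeftDvd 0 q ∧ g = nbar (d * a) (d * b) (d * c) * q := by
  obtain ⟨⟨b₁, h20⟩, ⟨b₂, h21⟩, ⟨b₃, h30⟩, ⟨b₄, h31⟩⟩ := hd
  obtain ⟨e, he⟩ := hA.exists_right_inv
  have rel := hg.lowerLeft_relation
  rw [h20, h21, h30, h31] at rel
  -- `(a, b; c, a) = B A⁻¹` where `d B` is the lower-left block and `A` the upper-left one;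
  -- `rel` is what makes the two diagonal entries agree. `LowerLeftDvd 0 q` puts `q` in the
  -- Siegel parabolic.
  refine ⟨e * (b₁ * g 1 1 - b₂ * g 1 0), e * (b₂ * g 0 0 - b₁ * g 0 1),
    e * (b₃ * g 1 1 - b₄ * g 1 0), _, (inGSp4_nbar _ _ _).mul hg, ?_,
    eq_nbar_mul_nbar_neg_mul _ _ _ g⟩
  refine ⟨zero_dvd_iff.2 ?_, zero_dvd_iff.2 ?_, zero_dvd_iff.2 ?_, zero_dvd_iff.2 ?_⟩ <;>
    simp only [nbar, mul_apply, Fin.sum_univ_four] <;> simp [h20, h21, h30, h31]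
  · linear_combination (-d * b₁) * he
  · linear_combination (-d * b₂) * he
  · linear_combination (-d * b₃) * he + e * g 1 0 * rel
  · linear_combination (-d * b₄) * he + e * g 1 1 * rel

theorem InGSp4.isUnit_upperLeft_det [IsLocalRing R] {d : R} {g : Matrix (Fin 4) (Fin 4) R}
    (hg : InGSp4 g) (hd : LowerLeftDvd d g) (hd' : ¬IsUnit d) :
    IsUnit (g 0 0 * g 1 1 - g 0 1 * g 1 0) := by
  have hres : ∀ {x : R}, d ∣ x → IsLocalRing.residue R x = 0 := fun hx =>
    (IsLocalRing.residue_eq_zero_iff _).2 fun hu => hd' (isUnit_of_dvd_unit hx hu)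
  have hdet := (IsLocalRing.residue_ne_zero_iff_isUnit _).2 hg.isUnit_det
  rw [RingHom.map_det, RingHom.mapMatrix_apply,
    det_eq_of_lowerLeft_eq_zero (hres hd.1) (hres hd.2.1) (hres hd.2.2.1) (hres hd.2.2.2)]
    at hdet
  rw [← IsLocalRing.residue_ne_zero_iff_isUnit, map_sub, map_mul, map_mul]
  exact left_ne_zero_of_mul hdet

theorem dvd_of_dvd_vecMul {u a b g₀₀ g₀₁ g₁₀ g₁₁ : R} (hA : IsUnit (g₀₀ * g₁₁ - g₀₁ * g₁₀))
    (h₀ : u ∣ a * g₀₀ + b * g₁₀) (h₁ : u ∣ a * g₀₁ + b * g₁₁) : u ∣ a ∧ u ∣ b := by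
  constructor
  · rw [← hA.dvd_mul_right]
    convert (h₀.mul_left g₁₁).sub (h₁.mul_left g₁₀) using 1; ring
  · rw [← hA.dvd_mul_right]
    convert (h₁.mul_left g₀₀).sub (h₀.mul_left g₀₁) using 1; ring

theorem dvd_of_nbar_mul_sdiag_eq [IsDomain R] {d u a b c : R} (hd : d ≠ 0)
    {G G' : Matrix (Fin 4) (Fin 4) R} (hG : LowerLeftDvd d G) (hG' : LowerLeftDvd d G')
    (h : nbar (d * a) (d * b) (d * c) * sdiag u * G = sdiag u * G') :
    (u ∣ a * G 0 0 + b * G 1 0 ∧ u ∣ a * G 0 1 + b * G 1 1) ∧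
      (u ∣ c * G 0 0 + a * G 1 0 ∧ u ∣ c * G 0 1 + a * G 1 1) := by
  obtain ⟨⟨x₂₀, h20⟩, ⟨x₂₁, h21⟩, ⟨x₃₀, h30⟩, ⟨x₃₁, h31⟩⟩ := hG
  obtain ⟨⟨y₂₀, h20'⟩, ⟨y₂₁, h21'⟩, ⟨y₃₀, h30'⟩, ⟨y₃₁, h31'⟩⟩ := hG'
  have e20 := congrFun (congrFun h 2) 0
  have e21 := congrFun (congrFun h 2) 1
  have e30 := congrFun (congrFun h 3) 0
  have e31 := congrFun (congrFun h 3) 1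
  simp [nbar, sdiag, mul_apply, Fin.sum_univ_four, vecMul_diagonal, h20, h21, h30, h31, h20',
    h21', h30', h31'] at e20 e21 e30 e31
  refine ⟨⟨⟨y₂₀ - x₂₀, ?_⟩, ⟨y₂₁ - x₂₁, ?_⟩⟩, ⟨⟨y₃₀ - x₃₀, ?_⟩, ⟨y₃₁ - x₃₁, ?_⟩⟩⟩ <;>
    apply mul_left_cancel₀ hd
  · linear_combination e20
  · linear_combination e21
  · linear_combination e30
  · linear_combination e31

end GSp4

namespace PadicInt

variable {p : ℕ} [Fact p.Prime]

theorem exists_eq_natCast_add_p_mul (x : ℤ_[p]) :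
    ∃ (i : Fin p) (r : ℤ_[p]), x = (i : ℕ) + p * r := by
  obtain ⟨r, hr⟩ := Ideal.mem_span_singleton.1 (appr_spec 1 x)
  exact ⟨⟨x.appr 1, by simpa using x.appr_lt 1⟩, r, by rw [← pow_one (p : ℤ_[p]), ← hr]; ring⟩

theorem fin_eq_of_p_dvd_natCast_sub {i j : Fin p} (h : (p : ℤ_[p]) ∣ (i : ℕ) - (j : ℕ)) :
    i = j := by
  rw [← norm_lt_one_iff_dvd] at h
  have hdvd := (norm_int_lt_one_iff_dvd ((i : ℕ) - (j : ℕ) : ℤ)).1 (by exact_mod_cast h)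
  exact Fin.ext ((Nat.modEq_iff_dvd.2 hdvd).eq_of_lt_of_lt j.isLt i.isLt).symm

theorem not_isUnit_p_pow {t : ℕ} (ht : 1 ≤ t) : ¬IsUnit ((p : ℤ_[p]) ^ t) := by
  rw [isUnit_pow_iff (by omega)]
  exact p_nonunit

end PadicInt

section SiegelParahoric

open PadicInt

noncomputable def digitNbar (p : ℕ) [Fact p.Prime] (t : ℕ) (v : Fin p × Fin p × Fin p) :
    Matrix (Fin 4) (Fin 4) ℤ_[p] :=
  nbar ((p : ℤ_[p]) ^ t * ((v.1 : ℕ) : ℤ_[p])) ((p : ℤ_[p]) ^ t * ((v.2.1 : ℕ) : ℤ_[p]))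
    ((p : ℤ_[p]) ^ t * ((v.2.2 : ℕ) : ℤ_[p]))

variable {p : ℕ} [Fact p.Prime] {t : ℕ}

theorem exists_digitNbar_mul_sdiag_eq (ht : 1 ≤ t) {g : Matrix (Fin 4) (Fin 4) ℤ_[p]}
    (hg : InGSp4 g) (hgd : LowerLeftDvd ((p : ℤ_[p]) ^ t) g) :
    ∃ v H, InGSp4 H ∧ LowerLeftDvd ((p : ℤ_[p]) ^ t) H ∧
      g * sdiag (p : ℤ_[p]) = digitNbar p t v * sdiag (p : ℤ_[p]) * H := by
  obtain ⟨a, b, c, q, hq, hq0, rfl⟩ :=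
    hg.exists_eq_nbar_mul (hg.isUnit_upperLeft_det hgd (not_isUnit_p_pow ht)) hgd
  obtain ⟨i, a', rfl⟩ := exists_eq_natCast_add_p_mul a
  obtain ⟨j, b', rfl⟩ := exists_eq_natCast_add_p_mul b
  obtain ⟨k, c', rfl⟩ := exists_eq_natCast_add_p_mul c
  set X := nbar (p * p ^ t * a') (p * p ^ t * b') (p * p ^ t * c') * q
  have hX : LowerLeftDvd ((p : ℤ_[p]) * p ^ t) X :=
    (lowerLeftDvd_nbar _ _ _ _).mul (hq0.mono (dvd_zero _))
  obtain ⟨H, hH, hHX⟩ := exists_sdiag_mul_eq_mul_sdiag hX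
  refine ⟨(i, j, k), H,
    ((inGSp4_nbar _ _ _).mul hq).of_sdiag_mul_eq_mul_sdiag prime_p.ne_zero hHX, hH, ?_⟩
  rw [Matrix.mul_assoc _ _ H, hHX, digitNbar, ← Matrix.mul_assoc, ← Matrix.mul_assoc,
    nbar_mul_nbar]
  congr 3 <;> ring

theorem eq_of_digitNbar_mul_sdiag_eq (ht : 1 ≤ t) {v w : Fin p × Fin p × Fin p}
    {G G' : Matrix (Fin 4) (Fin 4) ℤ_[p]} (hG : InGSp4 G)
    (hGd : LowerLeftDvd ((p : ℤ_[p]) ^ t) G) (hG'd : LowerLeftDvd ((p : ℤ_[p]) ^ t) G')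
    (h : digitNbar p t v * sdiag (p : ℤ_[p]) * G = digitNbar p t w * sdiag (p : ℤ_[p]) * G') :
    v = w := by
  set N := nbar (-((p : ℤ_[p]) ^ t * ((w.1 : ℕ) : ℤ_[p])))
    (-((p : ℤ_[p]) ^ t * ((w.2.1 : ℕ) : ℤ_[p]))) (-((p : ℤ_[p]) ^ t * ((w.2.2 : ℕ) : ℤ_[p])))
  have h' : nbar ((p : ℤ_[p]) ^ t * (((v.1 : ℕ) : ℤ_[p]) - (w.1 : ℕ)))
      ((p : ℤ_[p]) ^ t * (((v.2.1 : ℕ) : ℤ_[p]) - (w.2.1 : ℕ)))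
      ((p : ℤ_[p]) ^ t * (((v.2.2 : ℕ) : ℤ_[p]) - (w.2.2 : ℕ))) * sdiag (p : ℤ_[p]) * G =
      sdiag (p : ℤ_[p]) * G' := by
    calc _ = N * (digitNbar p t v * sdiag (p : ℤ_[p]) * G) := by
          rw [digitNbar, ← Matrix.mul_assoc, ← Matrix.mul_assoc, nbar_mul_nbar]
          congr 3 <;> ring
      _ = N * (digitNbar p t w * sdiag (p : ℤ_[p]) * G') := by rw [h]
      _ = sdiag (p : ℤ_[p]) * G' := by
          rw [digitNbar, ← Matrix.mul_assoc, ← Matrix.mul_assoc, nbar_mul_nbar]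
          simp [nbar_zero]
  obtain ⟨⟨h₀, h₁⟩, ⟨h₂, h₃⟩⟩ :=
    dvd_of_nbar_mul_sdiag_eq (pow_ne_zero t prime_p.ne_zero) hGd hG'd h'
  have hA := hG.isUnit_upperLeft_det hGd (not_isUnit_p_pow ht)
  obtain ⟨d₁, d₂⟩ := dvd_of_dvd_vecMul hA h₀ h₁
  obtain ⟨d₃, -⟩ := dvd_of_dvd_vecMul hA h₂ h₃
  exact Prod.ext (fin_eq_of_p_dvd_natCast_sub d₁)
    (Prod.ext (fin_eq_of_p_dvd_natCast_sub d₂) (fin_eq_of_p_dvd_natCast_sub d₃))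

theorem map_coe_mul (A B : Matrix (Fin 4) (Fin 4) ℤ_[p]) :
    (A * B).map (fun a : ℤ_[p] => (a : ℚ_[p])) =
      A.map (fun a => (a : ℚ_[p])) * B.map (fun a => (a : ℚ_[p])) :=
  Matrix.map_mul (f := PadicInt.Coe.ringHom)

theorem map_coe_sdiag : (sdiag (p : ℤ_[p])).map (fun a : ℤ_[p] => (a : ℚ_[p])) = sMat p := by
  ext i j
  fin_cases i <;> fin_cases j <;> simp [sdiag, sMat]

theorem map_coe_digitNbar (v : Fin p × Fin p × Fin p) :
    (digitNbar p t v).map (fun a : ℤ_[p] => (a : ℚ_[p])) =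
      nbar ((p : ℚ_[p]) ^ t * ((v.1 : ℕ) : ℚ_[p])) ((p : ℚ_[p]) ^ t * ((v.2.1 : ℕ) : ℚ_[p]))
        ((p : ℚ_[p]) ^ t * ((v.2.2 : ℕ) : ℚ_[p])) := by
  ext i j
  fin_cases i <;> fin_cases j <;> simp [digitNbar, nbar]

theorem map_coe_digitNbar_mul_sdiag_mul (v : Fin p × Fin p × Fin p)
    (G : Matrix (Fin 4) (Fin 4) ℤ_[p]) :
    (digitNbar p t v * sdiag (p : ℤ_[p]) * G).map (fun a => (a : ℚ_[p])) =
      nbar ((p : ℚ_[p]) ^ t * ((v.1 : ℕ) : ℚ_[p])) ((p : ℚ_[p]) ^ t * ((v.2.1 : ℕ) : ℚ_[p]))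
        ((p : ℚ_[p]) ^ t * ((v.2.2 : ℕ) : ℚ_[p])) * sMat p * G.map (fun a => (a : ℚ_[p])) := by
  rw [map_coe_mul, map_coe_mul, map_coe_digitNbar, map_coe_sdiag]

end SiegelParahoric

/-- The double coset `K·s·K` is the disjoint union of the `p³` left cosets
`n̄(p^t x, p^t y, p^t z)·s·K`, as `(x,y,z)` ranges over `{0,…,p−1}³`. -/
theorem stmt8 (p : ℕ) [Fact p.Prime] (t : ℕ) (ht : 1 ≤ t) :
    {m : Matrix (Fin 4) (Fin 4) ℚ_[p] |
        ∃ k₁ ∈ SiegelParahoric p t, ∃ k₂ ∈ SiegelParahoric p t,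
          m = k₁ * sMat p * k₂} =
      (⋃ v : Fin p × Fin p × Fin p, Ucoset p t v) ∧
    ∀ v w : Fin p × Fin p × Fin p, v ≠ w → Disjoint (Ucoset p t v) (Ucoset p t w) := by
  refine ⟨Set.ext fun m => ⟨?_, fun hm => ?_⟩, fun v w hvw => Set.disjoint_left.2 ?_⟩
  · rintro ⟨_, ⟨g, rfl, hg, hgd⟩, _, ⟨h, rfl, hh, hhd⟩, rfl⟩
    obtain ⟨v, H, hH, hHd, hgH⟩ := exists_digitNbar_mul_sdiag_eq ht hg hgd
    refine Set.mem_iUnion.2 ⟨v, _, ⟨H * h, rfl, hH.mul hh, hHd.mul hhd⟩, ?_⟩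
    rw [← map_coe_digitNbar_mul_sdiag_mul, ← map_coe_sdiag, ← map_coe_mul, ← map_coe_mul, hgH,
      Matrix.mul_assoc]
  · obtain ⟨v, k, hk, rfl⟩ := Set.mem_iUnion.1 hm
    exact ⟨_, ⟨_, (map_coe_digitNbar v).symm, inGSp4_nbar _ _ _, lowerLeftDvd_nbar _ _ _ _⟩,
      k, hk, rfl⟩
  · rintro _ ⟨_, ⟨G, rfl, hG, hGd⟩, rfl⟩ ⟨_, ⟨G', rfl, -, hG'd⟩, hm⟩
    rw [← map_coe_digitNbar_mul_sdiag_mul, ← map_coe_digitNbar_mul_sdiag_mul] at hm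
    exact hvw (eq_of_digitNbar_mul_sdiag_eq ht hG hGd hG'd
      (Matrix.map_injective Subtype.val_injective hm))
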